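/- arXiv:2401.10033 — 7 statements merged into one kernel-verified Lean document; each statement's English description precedes it below -/
import Mathlib

section
/- Let R be a commutative ring and let t be a ring term over R that contains at least one variable. Then t is not related to the term 0 by the equivalence closure of the compatible closure of the rules ET−1 through ET9 alone (i.e. with rule ET10 omitted). In other words, any chain of elementary transformations turning t into the term 0 must use rule ET10 at some step. -/
/-- Ring terms over a commutative ring `R`. -/
inductive RingTerm (R : Type*) where
  | X : ℕ → RingTerm R
  | C : R → RingTerm R
  | zero : RingTerm R
  | one : RingTerm R
  | add : RingTerm R → RingTerm R → RingTerm R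
  | mul : RingTerm R → RingTerm R → RingTerm R

namespace RingTerm

variable {R : Type*} [CommRing R]

/-- The number of occurrences of the variable `X i` in a term. -/
def varCount : RingTerm R → ℕ → ℕ
  | X j, i => if j = i then 1 else 0
  | C _, _ => 0
  | zero, _ => 0
  | one, _ => 0
  | add t u, i => varCount t i + varCount u i
  | mul t u, i => varCount t i + varCount u i

/-- One-step elementary transformation using only the rules ET−1 … ET9
(rule ET10 omitted), closed under the term-forming operations. -/
inductive StepNoET10 : RingTerm R → RingTerm R → Prop where
  | etm1 : StepNoET10 zero (C 0)
  | et0 : StepNoET10 one (C 1)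
  | et1 (r s : R) : StepNoET10 (add (C r) (C s)) (C (r + s))
  | et2 (r s : R) : StepNoET10 (mul (C r) (C s)) (C (r * s))
  | et3 (u : RingTerm R) : StepNoET10 (add zero u) u
  | et4 (u : RingTerm R) : StepNoET10 (mul one u) u
  | et5 (u u' : RingTerm R) : StepNoET10 (add u u') (add u' u)
  | et6 (u u' : RingTerm R) : StepNoET10 (mul u u') (mul u' u)
  | et7 (u u' u'' : RingTerm R) :
      StepNoET10 (add u (add u' u'')) (add (add u u') u'')
  | et8 (u u' u'' : RingTerm R) :
      StepNoET10 (mul u (mul u' u'')) (mul (mul u u') u'')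
  | et9 (u u' u'' : RingTerm R) :
      StepNoET10 (mul u (add u' u'')) (add (mul u u') (mul u u''))
  | addLeft {t t' : RingTerm R} (u : RingTerm R) :
      StepNoET10 t t' → StepNoET10 (add t u) (add t' u)
  | addRight (u : RingTerm R) {t t' : RingTerm R} :
      StepNoET10 t t' → StepNoET10 (add u t) (add u t')
  | mulLeft {t t' : RingTerm R} (u : RingTerm R) :
      StepNoET10 t t' → StepNoET10 (mul t u) (mul t' u)
  | mulRight (u : RingTerm R) {t t' : RingTerm R} :
      StepNoET10 t t' → StepNoET10 (mul u t) (mul u t')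

end RingTerm

open RingTerm in
lemma step_varCount_pos {R : Type*} [CommRing R] {t t' : RingTerm R}
    (h : StepNoET10 t t') (i : ℕ) :
    0 < varCount t i ↔ 0 < varCount t' i := by
  induction h <;> simp only [varCount] at * <;> omega

open RingTerm in
/-- a ring term containing at least one variable cannot be
transformed into the term `0` using only the rules ET−1 … ET9; that is, any
chain of elementary transformations turning it into `0` must use ET10. -/
theorem nonconstant_not_feq_zero_without_ET10 {R : Type*} [CommRing R]
    (t : RingTerm R) (hvar : ∃ i : ℕ, 0 < varCount t i) :
    ¬ Relation.EqvGen StepNoET10 t RingTerm.zero := by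
  obtain ⟨i, hi⟩ := hvar
  intro h
  have key : ∀ a b : RingTerm R, Relation.EqvGen StepNoET10 a b →
      (0 < varCount a i ↔ 0 < varCount b i) := by
    intro a b hab
    induction hab with
    | rel _ _ h => exact step_varCount_pos h i
    | refl => exact Iff.rfl
    | symm _ _ _ ih => exact ih.symm
    | trans _ _ _ _ _ ih1 ih2 => exact ih1.trans ih2
  have := (key _ _ h).mp hi
  simp [varCount] at this
end

section
/- Let R be a commutative ring and m̄ : ℕ →₀ ℕ be a finitely supported exponent vector. Then any two m̄-monomials (ring terms over R built only from variables and the binary symbol ·, in which each variable X i occurs exactly m̄ i times; for m̄ = 0 the unique m̄-monomial is the term 1) are f-equivalent. -/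
namespace RingTerm

variable {R : Type*} [CommRing R]

/-- The evaluation map `Ψ` into multivariate polynomials. -/
noncomputable def psi : RingTerm R → MvPolynomial ℕ R
  | X i => MvPolynomial.X i
  | C r => MvPolynomial.C r
  | zero => 0
  | one => 1
  | add t u => psi t + psi u
  | mul t u => psi t * psi u

/-- One-step elementary transformation: the twelve rules ET−1 … ET10,
closed under the term-forming operations (compatible closure). -/
inductive Step : RingTerm R → RingTerm R → Prop where
  | etm1 : Step zero (C 0)
  | et0 : Step one (C 1)
  | et1 (r s : R) : Step (add (C r) (C s)) (C (r + s))
  | et2 (r s : R) : Step (mul (C r) (C s)) (C (r * s))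
  | et3 (u : RingTerm R) : Step (add zero u) u
  | et4 (u : RingTerm R) : Step (mul one u) u
  | et5 (u u' : RingTerm R) : Step (add u u') (add u' u)
  | et6 (u u' : RingTerm R) : Step (mul u u') (mul u' u)
  | et7 (u u' u'' : RingTerm R) : Step (add u (add u' u'')) (add (add u u') u'')
  | et8 (u u' u'' : RingTerm R) : Step (mul u (mul u' u'')) (mul (mul u u') u'')
  | et9 (u u' u'' : RingTerm R) :
      Step (mul u (add u' u'')) (add (mul u u') (mul u u''))
  | et10 (u : RingTerm R) : Step (mul zero u) zero
  | addLeft {t t' : RingTerm R} (u : RingTerm R) :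
      Step t t' → Step (add t u) (add t' u)
  | addRight (u : RingTerm R) {t t' : RingTerm R} :
      Step t t' → Step (add u t) (add u t')
  | mulLeft {t t' : RingTerm R} (u : RingTerm R) :
      Step t t' → Step (mul t u) (mul t' u)
  | mulRight (u : RingTerm R) {t t' : RingTerm R} :
      Step t t' → Step (mul u t) (mul u t')

/-- f-equivalence: the equivalence closure of the one-step transformation. -/
def FEq (t u : RingTerm R) : Prop := Relation.EqvGen Step t u

end RingTerm

namespace RingTerm

variable {R : Type*}

/-- A term built only from variables and the binary symbol `·`. -/
def MulOnly : RingTerm R → Prop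
  | X _ => True
  | mul t u => MulOnly t ∧ MulOnly u
  | _ => False

/-- An `m̄`-monomial: a term built only from variables and `·` in which each
variable `X i` occurs exactly `m̄ i` times; for `m̄ = 0` it is the term `1`. -/
def IsMonomial (m : ℕ →₀ ℕ) (t : RingTerm R) : Prop :=
  (m = 0 ∧ t = one) ∨ (MulOnly t ∧ ∀ i, varCount t i = m i)

/-- Nonempty iterated sums: `IsSumOfPos l s` holds iff `s` is obtained from a
term built only from variables (each occurring exactly once) and `+` by
substituting the terms of the multiset `l` for the variables. -/
inductive IsSumOfPos : Multiset (RingTerm R) → RingTerm R → Prop where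
  | single (t : RingTerm R) : IsSumOfPos {t} t
  | add {l l' : Multiset (RingTerm R)} {s s' : RingTerm R} :
      IsSumOfPos l s → IsSumOfPos l' s' → IsSumOfPos (l + l') (add s s')

/-- `s` is a sum of the terms in the multiset `l`; for `l = 0` the unique sum
is the term `0`. -/
def IsSumOf (l : Multiset (RingTerm R)) (s : RingTerm R) : Prop :=
  (l = 0 ∧ s = zero) ∨ IsSumOfPos l s

end RingTerm

/-!
Every monomial is f-equivalent to the right-nested product `X j₁ · (X j₂ · (⋯ · (X jₙ · 1)))`
of its list of variable occurrences: associativity (ET8) and the unit law (ET4) flatten a product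
of two such normal forms into one. Commutativity (ET6) and associativity swap two adjacent
factors, so normal forms of permuted lists are f-equivalent, and the variable lists of two
`m̄`-monomials are permutations of each other since they have the same multiplicities.
-/

theorem Relation.EqvGen.map {α β : Type*} {r : α → α → Prop} {s : β → β → Prop} (f : α → β)
    (hf : ∀ a b, r a b → s (f a) (f b)) {a b : α} (h : EqvGen r a b) :
    EqvGen s (f a) (f b) := by
  induction h with
  | rel a b hab => exact .rel _ _ (hf a b hab)
  | refl a => exact .refl _
  | symm a b _ ih => exact .symm _ _ ih
  | trans a b c _ _ ih₁ ih₂ => exact .trans _ _ _ ih₁ ih₂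

namespace RingTerm

section Leaves

variable {R : Type*}

def leaves : RingTerm R → List ℕ
  | X j => [j]
  | C _ => []
  | zero => []
  | one => []
  | add t u => leaves t ++ leaves u
  | mul t u => leaves t ++ leaves u

theorem count_leaves (i : ℕ) : ∀ t : RingTerm R, (leaves t).count i = varCount t i
  | X j => by simp [leaves, varCount, List.count_singleton]
  | C _ | zero | one => rfl
  | add t u | mul t u => by simp [leaves, varCount, count_leaves i t, count_leaves i u]

theorem IsMonomial.count_leaves {m : ℕ →₀ ℕ} {t : RingTerm R} (ht : IsMonomial m t) (i : ℕ) :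
    (leaves t).count i = m i := by
  rcases ht with ⟨rfl, rfl⟩ | ⟨-, hm⟩
  · rfl
  · rw [RingTerm.count_leaves, hm]

def listProd : List ℕ → RingTerm R
  | [] => one
  | j :: l => mul (X j) (listProd l)

end Leaves

variable {R : Type*} [CommRing R]

theorem FEq.refl (t : RingTerm R) : FEq t t := Relation.EqvGen.refl t

theorem FEq.symm {t u : RingTerm R} (h : FEq t u) : FEq u t := Relation.EqvGen.symm _ _ h

theorem FEq.trans {t u v : RingTerm R} (h : FEq t u) (h' : FEq u v) : FEq t v :=
  Relation.EqvGen.trans _ _ _ h h'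

theorem Step.feq {t u : RingTerm R} (h : Step t u) : FEq t u := Relation.EqvGen.rel _ _ h

theorem FEq.mul {t t' u u' : RingTerm R} (ht : FEq t t') (hu : FEq u u') :
    FEq (mul t u) (mul t' u') :=
  FEq.trans (Relation.EqvGen.map (RingTerm.mul · u) (fun _ _ ↦ Step.mulLeft u) ht)
    (Relation.EqvGen.map (RingTerm.mul t') (fun _ _ ↦ Step.mulRight t') hu)

theorem feq_mul_assoc (t u v : RingTerm R) : FEq (mul (mul t u) v) (mul t (mul u v)) :=
  (Step.et8 t u v).feq.symm

theorem feq_mul_listProd_append (l l' : List ℕ) :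
    FEq (mul (listProd l) (listProd l') : RingTerm R) (listProd (l ++ l')) := by
  induction l with
  | nil => exact (Step.et4 _).feq
  | cons j l ih => exact (feq_mul_assoc _ _ _).trans ((FEq.refl _).mul ih)

theorem feq_listProd_leaves : ∀ {t : RingTerm R}, MulOnly t → FEq t (listProd (leaves t))
  | X j, _ => (Step.et4 (X j)).feq.symm.trans (Step.et6 one (X j)).feq
  | mul _ _, ⟨ht, hu⟩ =>
    ((feq_listProd_leaves ht).mul (feq_listProd_leaves hu)).trans
      (feq_mul_listProd_append _ _)

theorem feq_listProd_swap (x y : ℕ) (l : List ℕ) :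
    FEq (listProd (y :: x :: l) : RingTerm R) (listProd (x :: y :: l)) :=
  (feq_mul_assoc _ _ _).symm.trans
    (((Step.et6 (X y) (X x)).feq.mul (FEq.refl _)).trans (feq_mul_assoc _ _ _))

theorem feq_listProd_of_perm {l l' : List ℕ} (h : l.Perm l') :
    FEq (listProd l : RingTerm R) (listProd l') := by
  induction h with
  | nil => exact FEq.refl _
  | cons j _ ih => exact (FEq.refl _).mul ih
  | swap x y l => exact feq_listProd_swap x y l
  | trans _ _ ih₁ ih₂ => exact ih₁.trans ih₂

theorem IsMonomial.feq_listProd_leaves {m : ℕ →₀ ℕ} {t : RingTerm R} (ht : IsMonomial m t) :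
    FEq t (listProd (leaves t)) := by
  rcases ht with ⟨-, rfl⟩ | ⟨ht, -⟩
  · exact FEq.refl _
  · exact RingTerm.feq_listProd_leaves ht

end RingTerm

open RingTerm in
/-- any two `m̄`-monomials are f-equivalent. -/
theorem monomials_feq {R : Type*} [CommRing R] (m : ℕ →₀ ℕ)
    (t u : RingTerm R) (ht : IsMonomial m t) (hu : IsMonomial m u) :
    FEq t u := by
  have hperm : (leaves t).Perm (leaves u) :=
    List.perm_iff_count.2 fun i ↦ by rw [ht.count_leaves, hu.count_leaves]
  exact ht.feq_listProd_leaves.trans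
    ((feq_listProd_of_perm hperm).trans hu.feq_listProd_leaves.symm)
end

section
/- Let R be a commutative ring and t be a standard ring term over R with carrier S[t]. Then Ψ t = S[t] in MvPolynomial ℕ R. -/
namespace RingTerm

/-- `t` is a standard ring term with carrier `p`: `t` is a sum of terms
`C (r i) · μ i`, `i = 1, …, N`, where the `r i` are nonzero and the `μ i` are
`m̄ i`-monomials with pairwise distinct exponent vectors, and
`p = Σ_i monomial (m̄ i) (r i)`. -/
noncomputable def IsStandardWithCarrier {R : Type*} [CommRing R]
    (t : RingTerm R) (p : MvPolynomial ℕ R) : Prop :=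
  ∃ (N : ℕ) (r : Fin N → R) (m : Fin N → (ℕ →₀ ℕ)) (μ : Fin N → RingTerm R),
    (∀ i, r i ≠ 0) ∧ Function.Injective m ∧
    (∀ i, IsMonomial (m i) (μ i)) ∧
    IsSumOf (Multiset.map (fun i => mul (C (r i)) (μ i)) Finset.univ.val) t ∧
    p = ∑ i : Fin N, MvPolynomial.monomial (m i) (r i)

end RingTerm

namespace RingTerm

variable {R : Type*} [CommRing R]

theorem MulOnly.exists_psi_eq_monomial {t : RingTerm R} (ht : MulOnly t) :
    ∃ m : ℕ →₀ ℕ, (∀ i, varCount t i = m i) ∧ psi t = MvPolynomial.monomial m 1 := by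
  induction t with
  | X j =>
    refine ⟨Finsupp.single j 1, fun i => ?_, rfl⟩
    simp [varCount, Finsupp.single_apply]
  | mul t u iht ihu =>
    obtain ⟨m, hm, hpsi_t⟩ := iht ht.1
    obtain ⟨m', hm', hpsi_u⟩ := ihu ht.2
    refine ⟨m + m', fun i => by simp [varCount, hm i, hm' i], ?_⟩
    rw [psi, hpsi_t, hpsi_u, MvPolynomial.monomial_mul, one_mul]
  | _ => exact ht.elim

theorem IsMonomial.psi_eq {m : ℕ →₀ ℕ} {t : RingTerm R} (h : IsMonomial m t) :
    psi t = MvPolynomial.monomial m 1 := by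
  rcases h with ⟨rfl, rfl⟩ | ⟨hmul, hcount⟩
  · simp [psi]
  · obtain ⟨m', hm', hpsi⟩ := hmul.exists_psi_eq_monomial
    rwa [show m = m' from Finsupp.ext fun i => (hcount i).symm.trans (hm' i)]

theorem IsSumOfPos.psi_eq {l : Multiset (RingTerm R)} {s : RingTerm R}
    (h : IsSumOfPos l s) : psi s = (l.map psi).sum := by
  induction h with
  | single _ => simp
  | add _ _ ih ih' => simp [psi, ih, ih']

theorem IsSumOf.psi_eq {l : Multiset (RingTerm R)} {s : RingTerm R}
    (h : IsSumOf l s) : psi s = (l.map psi).sum := by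
  rcases h with ⟨rfl, rfl⟩ | h
  · simp [psi]
  · exact h.psi_eq

theorem IsMonomial.psi_C_mul {m : ℕ →₀ ℕ} {μ : RingTerm R} (hμ : IsMonomial m μ) (r : R) :
    psi (mul (C r) μ) = MvPolynomial.monomial m r := by
  rw [psi, psi, hμ.psi_eq, MvPolynomial.C_mul_monomial, mul_one]

end RingTerm

open RingTerm in
/-- for a standard ring term `t` with carrier `S[t]` one has
`Ψ t = S[t]`. -/
theorem psi_standard_eq_carrier {R : Type*} [CommRing R]
    (t : RingTerm R) (p : MvPolynomial ℕ R)
    (h : IsStandardWithCarrier t p) : psi t = p := by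
  obtain ⟨N, r, m, μ, -, -, hmon, hsum, rfl⟩ := h
  rw [hsum.psi_eq, Multiset.map_map]
  exact Finset.sum_congr rfl fun i _ => (hmon i).psi_C_mul (r i)
end

section
/- Let S be a finite set of natural numbers and μ, ν be S-monomials_∧. If μ and ν have the same type, then (μ ∨ ν) is f-equivalent to μ and to ν. If μ and ν have different types, then (μ ∧ ν) is f-equivalent to the term 0. -/
/-- Boolean terms (formulas). -/
inductive BT where
  | X : ℕ → BT
  | zero : BT
  | one : BT
  | or : BT → BT → BT
  | and : BT → BT → BT
  | not : BT → BT

namespace BT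

/-- The evaluation map `Φ_A` of a Boolean term in a Boolean algebra `A`
under an assignment `v : ℕ → A` of the variables. -/
def eval {A : Type*} [BooleanAlgebra A] (v : ℕ → A) : BT → A
  | X i => v i
  | zero => ⊥
  | one => ⊤
  | or t u => eval v t ⊔ eval v u
  | and t u => eval v t ⊓ eval v u
  | not t => (eval v t)ᶜ

/-- One-step Boolean transformation: the nineteen rules BT1–BT19, closed
under the term-forming operations (compatible closure). -/
inductive Step : BT → BT → Prop where
  | bt1 (u : BT) : Step (and zero u) zero
  | bt2 (u : BT) : Step (or zero u) u
  | bt3 (u : BT) : Step (and one u) u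
  | bt4 (u : BT) : Step (or one u) one
  | bt5 (u : BT) : Step (and u (not u)) zero
  | bt6 (u : BT) : Step (or u (not u)) one
  | bt7 (u u' : BT) : Step (or u u') (or u' u)
  | bt8 (u u' : BT) : Step (and u u') (and u' u)
  | bt9 (u u' u'' : BT) : Step (or u (or u' u'')) (or (or u u') u'')
  | bt10 (u u' u'' : BT) : Step (and u (and u' u'')) (and (and u u') u'')
  | bt11 (u : BT) : Step (or u u) u
  | bt12 (u : BT) : Step (and u u) u
  | bt13 (u u' u'' : BT) : Step (or u (and u' u'')) (and (or u u') (or u u''))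
  | bt14 (u u' u'' : BT) : Step (and u (or u' u'')) (or (and u u') (and u u''))
  | bt15 (u u' : BT) : Step (or u (and u u')) u
  | bt16 (u u' : BT) : Step (and u (or u u')) u
  | bt17 (u : BT) : Step (not (not u)) u
  | bt18 (u u' : BT) : Step (not (or u u')) (and (not u) (not u'))
  | bt19 (u u' : BT) : Step (not (and u u')) (or (not u) (not u'))
  | orLeft {t t' : BT} (u : BT) : Step t t' → Step (or t u) (or t' u)
  | orRight (u : BT) {t t' : BT} : Step t t' → Step (or u t) (or u t')
  | andLeft {t t' : BT} (u : BT) : Step t t' → Step (and t u) (and t' u)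
  | andRight (u : BT) {t t' : BT} : Step t t' → Step (and u t) (and u t')
  | notCong {t t' : BT} : Step t t' → Step (not t) (not t')

/-- f-equivalence of Boolean terms: the equivalence closure of `Step`. -/
def FEq (t u : BT) : Prop := Relation.EqvGen Step t u

end BT

namespace BT

/-- The literal of index `i` of type `τ i`: `X i` if `τ i = false`,
`¬ X i` if `τ i = true`. -/
def lit (τ : ℕ → Bool) (i : ℕ) : BT := if τ i then not (X i) else X i

/-- `IsMeetOfLits τ S t`: `t` is an iterated meet, in some order and
bracketing, of the literals `lit τ i` for `i ∈ S`, each used exactly once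
(`S` nonempty). -/
inductive IsMeetOfLits (τ : ℕ → Bool) : Finset ℕ → BT → Prop where
  | single (i : ℕ) : IsMeetOfLits τ {i} (lit τ i)
  | and {S S' : Finset ℕ} {t t' : BT} (h : Disjoint S S') :
      IsMeetOfLits τ S t → IsMeetOfLits τ S' t' →
      IsMeetOfLits τ (S ∪ S') (and t t')

/-- An `S`-monomial_∧ of type `τ`: an iterated meet of the literals of the
variables indexed by `S`, one per element of `S`; for `S = ∅` it is the
term `1`. (Only the values of `τ` on `S` are relevant.) -/
def IsMonA (S : Finset ℕ) (τ : ℕ → Bool) (t : BT) : Prop :=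
  (S = ∅ ∧ t = one) ∨ IsMeetOfLits τ S t

/-- Nonempty iterated joins of the terms in a multiset. -/
inductive IsJoinOfPos : Multiset BT → BT → Prop where
  | single (t : BT) : IsJoinOfPos {t} t
  | or {l l' : Multiset BT} {s s' : BT} :
      IsJoinOfPos l s → IsJoinOfPos l' s' → IsJoinOfPos (l + l') (or s s')

/-- `s` is an iterated join (in some order and bracketing) of the terms in
the multiset `l`; the empty join is the term `0`. -/
def IsJoinOf (l : Multiset BT) (s : BT) : Prop :=
  (l = 0 ∧ s = zero) ∨ IsJoinOfPos l s

end BT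

namespace BT

lemma FEq.rfl (t : BT) : FEq t t := Relation.EqvGen.refl t

lemma FEq.symm' {t u : BT} (h : FEq t u) : FEq u t := Relation.EqvGen.symm _ _ h

lemma FEq.trans' {t u v : BT} (h : FEq t u) (h' : FEq u v) : FEq t v :=
  Relation.EqvGen.trans _ _ _ h h'

lemma Step.feq {t u : BT} (h : Step t u) : FEq t u := Relation.EqvGen.rel _ _ h

lemma FEq.andL {t t' : BT} (u : BT) (h : FEq t t') : FEq (and t u) (and t' u) := by
  induction h with
  | rel a b h => exact (Step.andLeft u h).feq
  | refl a => exact FEq.rfl _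
  | symm a b _ ih => exact ih.symm'
  | trans a b c _ _ ih ih' => exact ih.trans' ih'

lemma FEq.andR (u : BT) {t t' : BT} (h : FEq t t') : FEq (and u t) (and u t') := by
  induction h with
  | rel a b h => exact (Step.andRight u h).feq
  | refl a => exact FEq.rfl _
  | symm a b _ ih => exact ih.symm'
  | trans a b c _ _ ih ih' => exact ih.trans' ih'

lemma FEq.orL {t t' : BT} (u : BT) (h : FEq t t') : FEq (or t u) (or t' u) := by
  induction h with
  | rel a b h => exact (Step.orLeft u h).feq
  | refl a => exact FEq.rfl _
  | symm a b _ ih => exact ih.symm'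
  | trans a b c _ _ ih ih' => exact ih.trans' ih'

lemma FEq.orR (u : BT) {t t' : BT} (h : FEq t t') : FEq (or u t) (or u t') := by
  induction h with
  | rel a b h => exact (Step.orRight u h).feq
  | refl a => exact FEq.rfl _
  | symm a b _ ih => exact ih.symm'
  | trans a b c _ _ ih ih' => exact ih.trans' ih'

lemma FEq.andCongr {a a' b b' : BT} (h : FEq a a') (h' : FEq b b') :
    FEq (and a b) (and a' b') := (h.andL b).trans' (FEq.andR a' h')

lemma fand_comm (a b : BT) : FEq (and a b) (and b a) := (Step.bt8 a b).feq

lemma fand_one (t : BT) : FEq (and t one) t :=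
  (fand_comm t one).trans' (Step.bt3 t).feq

/-- (a∧b)∧(c∧d) ≈ (a∧c)∧(b∧d) -/
lemma fand_swap4 (a b c d : BT) :
    FEq (and (and a b) (and c d)) (and (and a c) (and b d)) := by
  refine ((Step.bt10 a b (and c d)).feq.symm').trans' ?_
  refine (FEq.andR a ?_).trans' (Step.bt10 a c (and b d)).feq
  -- b ∧ (c ∧ d) ≈ c ∧ (b ∧ d)
  refine (Step.bt10 b c d).feq.trans' ?_
  refine (FEq.andL d (fand_comm b c)).trans' ?_
  exact (Step.bt10 c b d).feq.symm'

lemma IsMeetOfLits.nonempty {τ : ℕ → Bool} {S : Finset ℕ} {t : BT}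
    (h : IsMeetOfLits τ S t) : S.Nonempty := by
  induction h with
  | single i => exact ⟨i, Finset.mem_singleton_self i⟩
  | and hd _ _ ih _ => exact ih.mono Finset.subset_union_left

lemma IsMonA.combine {A B : Finset ℕ} {τ : ℕ → Bool} {r t : BT}
    (hd : Disjoint A B) (hr : IsMonA A τ r) (ht : IsMonA B τ t) :
    ∃ r', IsMonA (A ∪ B) τ r' ∧ FEq (and r t) r' := by
  rcases hr with ⟨hA, rfl⟩ | hr
  · subst hA
    exact ⟨t, by simpa using ht, (Step.bt3 t).feq⟩
  rcases ht with ⟨hB, rfl⟩ | ht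
  · subst hB
    exact ⟨r, by rw [Finset.union_empty]; exact Or.inr hr, fand_one r⟩
  exact ⟨and r t, Or.inr (IsMeetOfLits.and hd hr ht), FEq.rfl _⟩

lemma IsMeetOfLits.extract {τ : ℕ → Bool} {S : Finset ℕ} {t : BT}
    (h : IsMeetOfLits τ S t) {i : ℕ} (hi : i ∈ S) :
    ∃ r, IsMonA (S.erase i) τ r ∧ FEq t (_root_.BT.and (lit τ i) r) := by
  induction h with
  | single j =>
      rcases Finset.mem_singleton.mp hi with rfl
      exact ⟨one, Or.inl ⟨Finset.erase_singleton i, rfl⟩, (fand_one _).symm'⟩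
  | @and A B t t' hd ht ht' iht iht' =>
      rcases Finset.mem_union.mp hi with hiA | hiB
      · obtain ⟨r, hr, hfe⟩ := iht hiA
        have hd' : Disjoint (A.erase i) B := hd.mono_left (Finset.erase_subset i A)
        obtain ⟨r', hr', hfe'⟩ := IsMonA.combine hd' hr (Or.inr ht')
        refine ⟨r', ?_, ?_⟩
        · have : (A ∪ B).erase i = A.erase i ∪ B := by
            rw [Finset.erase_union_distrib, Finset.erase_eq_of_notMem
              (fun hiB => (hd.forall_ne_finset hiA hiB) rfl)]
          rwa [this]
        · refine (FEq.andL t' hfe).trans' ?_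
          exact ((Step.bt10 (lit τ i) r t').feq.symm').trans' (FEq.andR _ hfe')
      · obtain ⟨r, hr, hfe⟩ := iht' hiB
        have hd' : Disjoint (B.erase i) A := (hd.symm).mono_left (Finset.erase_subset i B)
        obtain ⟨r', hr', hfe'⟩ := IsMonA.combine hd' hr (Or.inr ht)
        refine ⟨r', ?_, ?_⟩
        · have : (A ∪ B).erase i = B.erase i ∪ A := by
            rw [Finset.union_comm, Finset.erase_union_distrib, Finset.erase_eq_of_notMem
              (fun hiA => (hd.forall_ne_finset hiA hiB) rfl)]
          rwa [this]
        · refine (fand_comm t t').trans' ?_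
          refine (FEq.andL t hfe).trans' ?_
          exact ((Step.bt10 (lit τ i) r t).feq.symm').trans' (FEq.andR _ hfe')

lemma IsMonA.extract {τ : ℕ → Bool} {S : Finset ℕ} {t : BT}
    (h : IsMonA S τ t) {i : ℕ} (hi : i ∈ S) :
    ∃ r, IsMonA (S.erase i) τ r ∧ FEq t (_root_.BT.and (lit τ i) r) := by
  rcases h with ⟨rfl, rfl⟩ | h
  · exact absurd hi (Finset.notMem_empty i)
  · exact h.extract hi

lemma monA_feq (S : Finset ℕ) : ∀ (τ τ' : ℕ → Bool) (μ ν : BT),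
    IsMonA S τ μ → IsMonA S τ' ν → (∀ i ∈ S, τ i = τ' i) → FEq μ ν := by
  induction S using Finset.strongInduction with
  | _ S ih =>
    intro τ τ' μ ν hμ hν hagree
    rcases S.eq_empty_or_nonempty with rfl | ⟨i, hi⟩
    · rcases hμ with ⟨_, rfl⟩ | hμ
      · rcases hν with ⟨_, rfl⟩ | hν
        · exact FEq.rfl _
        · exact absurd hν.nonempty (by simp)
      · exact absurd hμ.nonempty (by simp)
    · obtain ⟨r, hr, hfe⟩ := hμ.extract hi
      obtain ⟨r', hr', hfe'⟩ := hν.extract hi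
      have hlit : lit τ i = lit τ' i := by unfold lit; rw [hagree i hi]
      have hrr' : FEq r r' :=
        ih (S.erase i) (Finset.erase_ssubset hi) τ τ' r r' hr hr'
          (fun j hj => hagree j (Finset.mem_of_mem_erase hj))
      refine hfe.trans' ?_
      refine (FEq.trans' ?_ hfe'.symm')
      rw [hlit]
      exact FEq.andR _ hrr'

end BT

open BT in
/-- for `S`-monomials_∧ `μ, ν` of types `τ, τ'`: if the types
agree on `S` then `(μ ∨ ν)` is f-equivalent to `μ` and to `ν`; if the types
differ somewhere on `S` then `(μ ∧ ν)` is f-equivalent to the term `0`. -/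
theorem monA_or_and (S : Finset ℕ) (τ τ' : ℕ → Bool) (μ ν : BT)
    (hμ : IsMonA S τ μ) (hν : IsMonA S τ' ν) :
    ((∀ i ∈ S, τ i = τ' i) → FEq (BT.or μ ν) μ ∧ FEq (BT.or μ ν) ν) ∧
    ((∃ i ∈ S, τ i ≠ τ' i) → FEq (BT.and μ ν) BT.zero) := by
  constructor
  · intro hagree
    have hμν : FEq μ ν := monA_feq S τ τ' μ ν hμ hν hagree
    constructor
    · exact ((FEq.orR μ hμν.symm').trans' (Step.bt11 μ).feq)
    · exact ((FEq.orL ν hμν).trans' (Step.bt11 ν).feq)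
  · rintro ⟨i, hi, hne⟩
    obtain ⟨r, hr, hfe⟩ := hμ.extract hi
    obtain ⟨r', hr', hfe'⟩ := hν.extract hi
    have hlit : FEq (BT.and (lit τ i) (lit τ' i)) BT.zero := by
      unfold lit
      rcases Bool.eq_false_or_eq_true (τ i) with h1 | h1 <;>
        rcases Bool.eq_false_or_eq_true (τ' i) with h2 | h2 <;>
          simp [h1, h2] at hne ⊢
      · exact ((Step.bt8 _ _).feq).trans' (Step.bt5 (X i)).feq
      · exact (Step.bt5 (X i)).feq
    refine (FEq.andCongr hfe hfe').trans' ?_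
    refine (fand_swap4 _ _ _ _).trans' ?_
    refine (FEq.andL _ hlit).trans' ?_
    exact (Step.bt1 _).feq
end

section
/- Let m, n ∈ ℕ₀ and t_1, …, t_m, u_1, …, u_n be Boolean terms. If s is an iterated join (in some order and bracketing, the empty join being the term 0) of t_1, …, t_m and s' is an iterated join of u_1, …, u_n, then the term (s ∧ s') is f-equivalent to any iterated join of the m·n terms (t_i ∧ u_j), i ∈ [m], j ∈ [n]. -/
/-!
Rules BT1–BT3, BT7–BT10 and BT14 make the f-equivalence classes of Boolean terms a
commutative semiring, with `∨` as addition and `∧` as multiplication. In it an iterated join is the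
sum of its terms, so the claim is the expansion of a product of two finite sums.
-/

namespace BT

def FClass : Type := Quot Step

namespace FClass

def mk : BT → FClass := Quot.mk Step

theorem mk_eq_mk_iff {a b : BT} : mk a = mk b ↔ FEq a b :=
  ⟨Quot.eqvGen_exact, Quot.eqvGen_sound⟩

theorem mk_eq_mk_of_step {a b : BT} (h : Step a b) : mk a = mk b := Quot.sound h

instance : Zero FClass := ⟨mk zero⟩

instance : One FClass := ⟨mk one⟩

instance : Add FClass :=
  ⟨Quot.map₂ or (fun a _ _ h => Step.orRight a h) (fun _ _ b h => Step.orLeft b h)⟩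

instance : Mul FClass :=
  ⟨Quot.map₂ and (fun a _ _ h => Step.andRight a h) (fun _ _ b h => Step.andLeft b h)⟩

theorem mk_or (a b : BT) : mk (or a b) = mk a + mk b := rfl

theorem mk_and (a b : BT) : mk (and a b) = mk a * mk b := rfl

@[elab_as_elim]
theorem ind {p : FClass → Prop} (h : ∀ a, p (mk a)) (x : FClass) : p x := Quot.ind h x

protected theorem add_comm (x y : FClass) : x + y = y + x := by
  induction x using ind; induction y using ind
  exact mk_eq_mk_of_step (.bt7 _ _)

protected theorem mul_comm (x y : FClass) : x * y = y * x := by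
  induction x using ind; induction y using ind
  exact mk_eq_mk_of_step (.bt8 _ _)

protected theorem add_assoc (x y z : FClass) : x + y + z = x + (y + z) := by
  induction x using ind; induction y using ind; induction z using ind
  exact (mk_eq_mk_of_step (.bt9 _ _ _)).symm

protected theorem mul_assoc (x y z : FClass) : x * y * z = x * (y * z) := by
  induction x using ind; induction y using ind; induction z using ind
  exact (mk_eq_mk_of_step (.bt10 _ _ _)).symm

protected theorem zero_add (x : FClass) : 0 + x = x := by
  induction x using ind
  exact mk_eq_mk_of_step (.bt2 _)

protected theorem one_mul (x : FClass) : 1 * x = x := by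
  induction x using ind
  exact mk_eq_mk_of_step (.bt3 _)

protected theorem zero_mul (x : FClass) : 0 * x = 0 := by
  induction x using ind
  exact mk_eq_mk_of_step (.bt1 _)

protected theorem left_distrib (x y z : FClass) : x * (y + z) = x * y + x * z := by
  induction x using ind; induction y using ind; induction z using ind
  exact mk_eq_mk_of_step (.bt14 _ _ _)

instance : CommSemiring FClass where
  add_assoc := FClass.add_assoc
  zero_add := FClass.zero_add
  add_zero x := by rw [FClass.add_comm, FClass.zero_add]
  add_comm := FClass.add_comm
  nsmul := nsmulRec
  mul_assoc := FClass.mul_assoc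
  one_mul := FClass.one_mul
  mul_one x := by rw [FClass.mul_comm, FClass.one_mul]
  zero_mul := FClass.zero_mul
  mul_zero x := by rw [FClass.mul_comm, FClass.zero_mul]
  left_distrib := FClass.left_distrib
  right_distrib x y z := by simp only [FClass.mul_comm _ z, FClass.left_distrib]
  mul_comm := FClass.mul_comm

end FClass

open FClass

theorem IsJoinOfPos.mk_eq_sum {l : Multiset BT} {s : BT} (h : IsJoinOfPos l s) :
    mk s = (l.map mk).sum := by
  induction h with
  | single t => simp
  | or _ _ ih ih' => rw [mk_or, ih, ih', Multiset.map_add, Multiset.sum_add]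

theorem IsJoinOf.mk_eq_sum {l : Multiset BT} {s : BT} (h : IsJoinOf l s) :
    mk s = (l.map mk).sum := by
  rcases h with ⟨rfl, rfl⟩ | h
  · rfl
  · exact h.mk_eq_sum

end BT

open BT in
/-- if `s` is an iterated join of `t 0, …, t (m-1)` and `s'` is
an iterated join of `u 0, …, u (n-1)`, then `(s ∧ s')` is f-equivalent to any
iterated join of the `m·n` terms `(t i ∧ u j)`. -/
theorem join_and_join_feq_join_of_ands (m n : ℕ)
    (t : Fin m → BT) (u : Fin n → BT) (s s' v : BT)
    (hs : IsJoinOf (Multiset.map t Finset.univ.val) s)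
    (hs' : IsJoinOf (Multiset.map u Finset.univ.val) s')
    (hv : IsJoinOf
      (Multiset.map (fun p : Fin m × Fin n => BT.and (t p.1) (u p.2))
        Finset.univ.val) v) :
    FEq (BT.and s s') v := by
  rw [← FClass.mk_eq_mk_iff, FClass.mk_and, hs.mk_eq_sum, hs'.mk_eq_sum, hv.mk_eq_sum]
  simp only [Multiset.map_map, Function.comp_def, ← Finset.sum_eq_multiset_sum,
    Finset.sum_mul_sum, Fintype.sum_prod_type, FClass.mk_and]
end

section
/- Let n ∈ ℕ and t be a Boolean term all of whose variables are among X 1, …, X n. Then there exists an n-standard DNF term u such that t and u are f-equivalent. -/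
namespace BT

/-- The finite set of indices of variables occurring in a Boolean term. -/
def vars : BT → Finset ℕ
  | X i => {i}
  | zero => ∅
  | one => ∅
  | or t u => vars t ∪ vars u
  | and t u => vars t ∪ vars u
  | not t => vars t

/-- An `n`-standard DNF term: an iterated join of finitely many
`{1,…,n}`-monomials_∧ with pairwise distinct types. -/
def IsDNF (n : ℕ) (t : BT) : Prop :=
  ∃ (k : ℕ) (τ : Fin k → ℕ → Bool) (μ : Fin k → BT),
    (∀ i, IsMonA (Finset.Icc 1 n) (τ i) (μ i)) ∧
    (∀ i j : Fin k, i ≠ j → ∃ l ∈ Finset.Icc 1 n, τ i l ≠ τ j l) ∧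
    IsJoinOf (Multiset.map μ Finset.univ.val) t

end BT

/-!
The f-equivalence classes of Boolean terms form a Boolean algebra, the Lindenbaum algebra: among
BT1–BT19 are commutativity, associativity and absorption for `∨` and `∧`, distributivity, and the
laws of `0`, `1` and complements. In any Boolean algebra the minterms over a finite set `V` of
variables join to `⊤`, and every element generated by the variables in `V` lies either above or
disjoint from each minterm; hence it is the join of the minterms below it. Read back as a term,
this join is a standard DNF term.
-/

theorem Finset.exists_mem_decide_ne_of_ne {α : Type*} [DecidableEq α] {V S S' : Finset α}
    (hS : S ⊆ V) (hS' : S' ⊆ V) (hne : S ≠ S') : ∃ l ∈ V, decide (l ∈ S) ≠ decide (l ∈ S') := by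
  obtain ⟨l, hl⟩ := not_forall.1 (mt Finset.ext hne)
  refine ⟨l, ?_, by simpa using hl⟩
  by_cases h : l ∈ S
  · exact hS h
  · exact hS' (by tauto)

namespace BT

section Minterms

variable {A : Type*} [BooleanAlgebra A] (x : ℕ → A)

/-- The minterm over `V` in which exactly the variables in `S` are negated, matching `lit`. -/
def minterm (V S : Finset ℕ) : A := V.inf fun i => if i ∈ S then (x i)ᶜ else x i

theorem minterm_insert {V S : Finset ℕ} {i : ℕ} (hi : i ∉ V) (hS : S ⊆ V) :
    minterm x (insert i V) S = x i ⊓ minterm x V S := by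
  rw [minterm, Finset.inf_insert, if_neg (fun h => hi (hS h)), minterm]

theorem minterm_insert_insert {V S : Finset ℕ} {i : ℕ} (hi : i ∉ V) :
    minterm x (insert i V) (insert i S) = (x i)ᶜ ⊓ minterm x V S := by
  rw [minterm, Finset.inf_insert, if_pos (Finset.mem_insert_self i S), minterm]
  congr 1
  refine Finset.inf_congr rfl fun j hj => ?_
  have hji : j ≠ i := by rintro rfl; exact hi hj
  simp only [Finset.mem_insert, hji, false_or]

theorem sup_minterm_powerset (V : Finset ℕ) : V.powerset.sup (minterm x V) = ⊤ := by
  induction V using Finset.induction with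
  | empty => simp [minterm]
  | @insert i V hi ih =>
    rw [Finset.powerset_insert, Finset.sup_union, Finset.sup_image, Function.comp_def,
      Finset.sup_congr rfl fun S hS => minterm_insert x hi (Finset.mem_powerset.1 hS),
      Finset.sup_congr rfl fun S _ => minterm_insert_insert x hi,
      ← Finset.sup_inf_distrib_left, ← Finset.sup_inf_distrib_left, ih, inf_top_eq, inf_top_eq,
      sup_compl_eq_top]

theorem minterm_le_or_disjoint_eval {V : Finset ℕ} (S : Finset ℕ) {t : BT}
    (ht : vars t ⊆ V) : minterm x V S ≤ t.eval x ∨ Disjoint (minterm x V S) (t.eval x) := by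
  induction t with
  | X i =>
    have hle : minterm x V S ≤ if i ∈ S then (x i)ᶜ else x i :=
      Finset.inf_le (f := fun i => if i ∈ S then (x i)ᶜ else x i) (ht (by simp [vars]))
    split_ifs at hle
    · exact Or.inr (le_compl_iff_disjoint_right.1 hle)
    · exact Or.inl hle
  | zero => exact Or.inr disjoint_bot_right
  | one => exact Or.inl le_top
  | or t u iht ihu =>
    simp only [vars, Finset.union_subset_iff] at ht
    rcases iht ht.1 with h | h
    · exact Or.inl (le_sup_of_le_left h)
    rcases ihu ht.2 with h' | h'
    · exact Or.inl (le_sup_of_le_right h')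
    · exact Or.inr (disjoint_sup_right.2 ⟨h, h'⟩)
  | and t u iht ihu =>
    simp only [vars, Finset.union_subset_iff] at ht
    rcases iht ht.1 with h | h
    · rcases ihu ht.2 with h' | h'
      · exact Or.inl (le_inf h h')
      · exact Or.inr (h'.inf_right' _)
    · exact Or.inr (h.inf_right _)
  | not t iht =>
    rcases iht ht with h | h
    · exact Or.inr (disjoint_compl_right_iff.2 h)
    · exact Or.inl (le_compl_iff_disjoint_right.2 h)

theorem exists_eval_eq_sup_minterm {V : Finset ℕ} {t : BT} (ht : vars t ⊆ V) :
    ∃ F ⊆ V.powerset, t.eval x = F.sup (minterm x V) := by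
  classical
  refine ⟨V.powerset.filter (minterm x V · ≤ t.eval x), Finset.filter_subset _ _, ?_⟩
  refine le_antisymm ?_ (Finset.sup_le fun S hS => (Finset.mem_filter.1 hS).2)
  calc t.eval x = V.powerset.sup fun S => t.eval x ⊓ minterm x V S := by
        rw [← Finset.sup_inf_distrib_left, sup_minterm_powerset, inf_top_eq]
    _ ≤ _ := Finset.sup_le fun S hS => by
        rcases minterm_le_or_disjoint_eval x S ht with h | h
        · exact inf_le_right.trans (Finset.le_sup (Finset.mem_filter.2 ⟨hS, h⟩))
        · rw [h.symm.eq_bot]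
          exact bot_le

end Minterms

/-- The Lindenbaum algebra of f-equivalence classes. Since `Step` is already closed under the
term-forming operations, these descend to `Quot Step` one rewriting step at a time. -/
def Lindenbaum : Type := Quot Step

namespace Lindenbaum

def mk (t : BT) : Lindenbaum := Quot.mk Step t

instance : Max Lindenbaum := ⟨Quot.map₂ or (fun _ _ _ => .orRight _) (fun _ _ _ => .orLeft _)⟩
instance : Min Lindenbaum := ⟨Quot.map₂ and (fun _ _ _ => .andRight _) (fun _ _ _ => .andLeft _)⟩
instance : Compl Lindenbaum := ⟨Quot.map not fun _ _ => .notCong⟩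
instance : Top Lindenbaum := ⟨mk one⟩
instance : Bot Lindenbaum := ⟨mk zero⟩

theorem mk_eq_mk {t u : BT} : mk t = mk u ↔ FEq t u :=
  ⟨Quot.eqvGen_exact, Quot.eqvGen_sound⟩

instance : Lattice Lindenbaum :=
  Lattice.mk'
    (by rintro ⟨a⟩ ⟨b⟩; exact Quot.sound (.bt7 a b))
    (by rintro ⟨a⟩ ⟨b⟩ ⟨c⟩; exact (Quot.sound (.bt9 a b c)).symm)
    (by rintro ⟨a⟩ ⟨b⟩; exact Quot.sound (.bt8 a b))
    (by rintro ⟨a⟩ ⟨b⟩ ⟨c⟩; exact (Quot.sound (.bt10 a b c)).symm)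
    (by rintro ⟨a⟩ ⟨b⟩; exact Quot.sound (.bt15 a b))
    (by rintro ⟨a⟩ ⟨b⟩; exact Quot.sound (.bt16 a b))

instance : DistribLattice Lindenbaum :=
  .ofInfSupLe (by rintro ⟨a⟩ ⟨b⟩ ⟨c⟩; exact le_of_eq (Quot.sound (.bt14 a b c)))

instance : BooleanAlgebra Lindenbaum where
  inf_compl_le_bot := by rintro ⟨a⟩; exact le_of_eq (Quot.sound (.bt5 a))
  top_le_sup_compl := by rintro ⟨a⟩; exact ge_of_eq (Quot.sound (.bt6 a))
  le_top := by rintro ⟨a⟩; exact sup_eq_right.1 (sup_comm _ _ |>.trans (Quot.sound (.bt4 a)))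
  bot_le := by rintro ⟨a⟩; exact sup_eq_right.1 (Quot.sound (.bt2 a))

theorem mk_eq_eval (t : BT) : mk t = t.eval (fun i => mk (X i)) := by
  induction t with
  | X i => rfl
  | zero => rfl
  | one => rfl
  | or t u iht ihu => rw [eval, ← iht, ← ihu]; rfl
  | and t u iht ihu => rw [eval, ← iht, ← ihu]; rfl
  | not t iht => rw [eval, ← iht]; rfl

end Lindenbaum

def joinList : List BT → BT
  | [] => zero
  | [a] => a
  | a :: b :: l => or a (joinList (b :: l))

def meetList : List BT → BT
  | [] => one
  | [a] => a
  | a :: b :: l => and a (meetList (b :: l))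

noncomputable def monomial (V S : Finset ℕ) : BT :=
  meetList (V.toList.map (lit fun i => decide (i ∈ S)))

noncomputable def dnf (V : Finset ℕ) (F : Finset (Finset ℕ)) : BT :=
  joinList (F.toList.map (monomial V))

section Eval

variable {A : Type*} [BooleanAlgebra A] (v : ℕ → A)

theorem eval_joinList (l : List BT) : (joinList l).eval v = (l.map (eval v)).foldr (· ⊔ ·) ⊥ := by
  induction l using joinList.induct <;> simp_all [joinList, eval]

theorem eval_meetList (l : List BT) : (meetList l).eval v = (l.map (eval v)).foldr (· ⊓ ·) ⊤ := by
  induction l using meetList.induct <;> simp_all [meetList, eval]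

theorem eval_joinList_map_toList {ι : Type*} (s : Finset ι) (f : ι → BT) :
    (joinList (s.toList.map f)).eval v = s.sup fun i => (f i).eval v := by
  rw [eval_joinList, Finset.sup_def, ← Finset.coe_toList, Multiset.map_coe, Multiset.sup_coe,
    List.map_map]
  rfl

theorem eval_meetList_map_toList {ι : Type*} (s : Finset ι) (f : ι → BT) :
    (meetList (s.toList.map f)).eval v = s.inf fun i => (f i).eval v := by
  rw [eval_meetList, Finset.inf_def, ← Finset.coe_toList, Multiset.map_coe, Multiset.inf_coe,
    List.map_map]
  rfl

theorem eval_lit (τ : ℕ → Bool) (i : ℕ) : (lit τ i).eval v = if τ i then (v i)ᶜ else v i := by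
  unfold lit; split <;> rfl

theorem eval_dnf (V : Finset ℕ) (F : Finset (Finset ℕ)) :
    (dnf V F).eval v = F.sup (minterm v V) := by
  simp only [dnf, monomial, eval_joinList_map_toList, eval_meetList_map_toList, eval_lit,
    decide_eq_true_eq]
  rfl

end Eval

theorem isMeetOfLits_meetList (τ : ℕ → Bool) :
    ∀ l : List ℕ, l ≠ [] → l.Nodup → IsMeetOfLits τ l.toFinset (meetList (l.map (lit τ)))
  | [], h, _ => absurd rfl h
  | [i], _, _ => by simpa [meetList] using IsMeetOfLits.single (τ := τ) i
  | i :: j :: l, _, hnd => by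
    rw [List.nodup_cons] at hnd
    rw [List.toFinset_cons, Finset.insert_eq]
    refine .and ?_ (.single i) (isMeetOfLits_meetList τ (j :: l) (List.cons_ne_nil _ _) hnd.2)
    rw [Finset.disjoint_singleton_left, List.mem_toFinset]
    exact hnd.1

theorem isMonA_monomial (V S : Finset ℕ) : IsMonA V (fun i => decide (i ∈ S)) (monomial V S) := by
  rcases V.eq_empty_or_nonempty with rfl | hV
  · exact Or.inl ⟨rfl, by simp [monomial, meetList]⟩
  · right
    simpa [monomial] using
      isMeetOfLits_meetList _ V.toList (by simpa using hV.ne_empty) V.nodup_toList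

theorem isJoinOfPos_joinList : ∀ l : List BT, l ≠ [] → IsJoinOfPos l (joinList l)
  | [], h => absurd rfl h
  | [a], _ => .single a
  | a :: b :: l, _ => by
    simpa [joinList] using
      IsJoinOfPos.or (.single a) (isJoinOfPos_joinList (b :: l) (List.cons_ne_nil _ _))

theorem isJoinOf_joinList (l : List BT) : IsJoinOf l (joinList l) := by
  by_cases hl : l = []
  · exact Or.inl ⟨by simp [hl], by simp [hl, joinList]⟩
  · exact Or.inr (isJoinOfPos_joinList l hl)

theorem isDNF_dnf {n : ℕ} {F : Finset (Finset ℕ)} (hF : F ⊆ (Finset.Icc 1 n).powerset) :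
    IsDNF n (dnf (Finset.Icc 1 n) F) := by
  have hsub (j : Fin F.toList.length) : F.toList[(j : ℕ)] ⊆ Finset.Icc 1 n :=
    Finset.mem_powerset.1 (hF (Finset.mem_toList.1 (List.getElem_mem _)))
  refine ⟨F.toList.length, fun j l => decide (l ∈ F.toList[(j : ℕ)]),
    fun j => monomial _ (F.toList[(j : ℕ)]), fun j => isMonA_monomial _ _, fun j j' hj => ?_, ?_⟩
  · exact Finset.exists_mem_decide_ne_of_ne (hsub j) (hsub j')
      fun h => hj (List.nodup_iff_injective_get.1 F.nodup_toList h)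
  · rw [Fin.univ_val_map, List.ofFn_getElem_eq_map]
    exact isJoinOf_joinList _

end BT

open BT in
theorem exists_dnf_feq_general (n : ℕ) (t : BT)
    (hvars : vars t ⊆ Finset.Icc 1 n) :
    ∃ u : BT, IsDNF n u ∧ FEq t u := by
  obtain ⟨F, hF, h⟩ := exists_eval_eq_sup_minterm (fun i => Lindenbaum.mk (X i)) hvars
  refine ⟨dnf (Finset.Icc 1 n) F, isDNF_dnf hF, Lindenbaum.mk_eq_mk.1 ?_⟩
  rw [Lindenbaum.mk_eq_eval, Lindenbaum.mk_eq_eval, h, eval_dnf]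

open BT in
/-- every Boolean term with variables among `X 1, …, X n` is
f-equivalent to an `n`-standard DNF term. -/
theorem exists_dnf_feq (n : ℕ) (hn : 0 < n) (t : BT)
    (hvars : vars t ⊆ Finset.Icc 1 n) :
    ∃ u : BT, IsDNF n u ∧ FEq t u :=
  exists_dnf_feq_general n t hvars
end

section
/- Boolean Independence Theorem: Let (A, Pr) be a finitary probability space, n ∈ ℕ, t and u be Boolean terms all of whose variables are among X 1, …, X n, and a_1, …, a_{2n} be events in A such that the tuple (a_1, …, a_n) is independent of the tuple (a_{n+1}, …, a_{2n}). Then the two events a := Φ_A(t; a_1, …, a_n) and b := Φ_A(u; a_{n+1}, …, a_{2n}) are independent: Pr(a ⊓ b) = Pr(a) · Pr(b). -/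
/-- The tuple `a` is independent of the tuple `b` (in a finitary probability
space with probability map `Pr`): for all index sets `X`, `Y`,
`Pr(⨅_{i∈X} a i ⊓ ⨅_{j∈Y} b j) = Pr(⨅_{i∈X} a i) · Pr(⨅_{j∈Y} b j)`,
the empty meet being `⊤`. -/
def IndepTuples {A : Type*} [BooleanAlgebra A] (Pr : A → ℝ)
    {I J : Type*} (a : I → A) (b : J → A) : Prop :=
  ∀ (X : Finset I) (Y : Finset J),
    Pr (X.inf a ⊓ Y.inf b) = Pr (X.inf a) * Pr (Y.inf b)

open Finset Function

section

variable {A : Type*} [BooleanAlgebra A]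

def FinitelyAdditive (Pr : A → ℝ) : Prop :=
  ∀ ⦃x y : A⦄, Disjoint x y → Pr (x ⊔ y) = Pr x + Pr y

namespace FinitelyAdditive

variable {Pr : A → ℝ}

theorem map_bot (hPr : FinitelyAdditive Pr) : Pr ⊥ = 0 := by
  have := hPr (disjoint_bot_left (a := ⊥))
  rw [bot_sup_eq] at this
  linarith

theorem map_finset_sup (hPr : FinitelyAdditive Pr) {ι : Type*} {s : Finset ι} {e : ι → A}
    (hs : (s : Set ι).PairwiseDisjoint e) : Pr (s.sup e) = ∑ i ∈ s, Pr (e i) := by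
  classical
  induction s using Finset.induction with
  | empty => exact hPr.map_bot
  | insert i s hi ih =>
    rw [coe_insert, Set.pairwiseDisjoint_insert_of_notMem (mem_coe.not.2 hi)] at hs
    rw [sup_insert, sum_insert hi, hPr (Finset.disjoint_sup_right.2 fun j hj => hs.2 j hj),
      ih hs.1]

theorem map_compl_inf (hPr : FinitelyAdditive Pr) (x y : A) :
    Pr (xᶜ ⊓ y) = Pr y - Pr (x ⊓ y) := by
  have hy : Pr y = Pr (x ⊓ y) + Pr (xᶜ ⊓ y) := by
    rw [← hPr ((disjoint_compl_right (a := x)).mono inf_le_left inf_le_left), ← inf_sup_right,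
      sup_compl_eq_top, top_inf_eq]
  linarith

end FinitelyAdditive

theorem Finset.inf_sumElim {α β γ : Type*} [SemilatticeInf α] [OrderTop α]
    (u : Finset (β ⊕ γ)) (f : β → α) (g : γ → α) :
    u.inf (Sum.elim f g) = u.toLeft.inf f ⊓ u.toRight.inf g := by
  conv_lhs => rw [← toLeft_disjSum_toRight (u := u)]
  exact sup_disjSum (α := αᵒᵈ) _ _ _

section Atoms

variable {I : Type*} [DecidableEq I]

theorem sup_powerset_inf_ite_compl (a : I → A) (s : Finset I) :
    (s.powerset.sup fun S => s.inf fun i => if i ∈ S then a i else (a i)ᶜ) = ⊤ := by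
  induction s using Finset.induction with
  | empty => simp
  | insert j s hj ih =>
    have hout : ∀ S ∈ s.powerset, (insert j s).inf (fun i => if i ∈ S then a i else (a i)ᶜ)
        = (a j)ᶜ ⊓ s.inf fun i => if i ∈ S then a i else (a i)ᶜ := fun S hS => by
      rw [inf_insert, if_neg fun h => hj (mem_powerset.1 hS h)]
    have hin : ∀ S ∈ s.powerset,
        (insert j s).inf (fun i => if i ∈ insert j S then a i else (a i)ᶜ)
          = a j ⊓ s.inf fun i => if i ∈ S then a i else (a i)ᶜ := fun S _ => by
      rw [inf_insert, if_pos (mem_insert_self j S)]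
      congr 1
      refine inf_congr rfl fun i hi => ?_
      simp only [mem_insert, ne_of_mem_of_not_mem hi hj, false_or]
    rw [powerset_insert, sup_union, sup_image, sup_congr rfl hout, Function.comp_def,
      sup_congr rfl hin, ← sup_inf_distrib_left, ← sup_inf_distrib_left, ih, inf_top_eq,
      inf_top_eq, compl_sup_eq_top]

variable [Fintype I]

def atom (a : I → A) (S : Finset I) : A :=
  univ.inf fun i => if i ∈ S then a i else (a i)ᶜ

theorem atom_eq_inf_disjSum (a : I → A) (S : Finset I) :
    atom a S = (S.disjSum Sᶜ).inf (Sum.elim a fun i => (a i)ᶜ) := by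
  rw [Finset.inf_sumElim, toLeft_disjSum, toRight_disjSum, atom, ← union_compl S, inf_union]
  congr 1
  · exact inf_congr rfl fun i hi => if_pos hi
  · exact inf_congr rfl fun i hi => if_neg (mem_compl.1 hi)

theorem atom_le_of_mem (a : I → A) {S : Finset I} {i : I} (hi : i ∈ S) : atom a S ≤ a i := by
  simpa [atom, hi] using inf_le (f := fun i => if i ∈ S then a i else (a i)ᶜ) (mem_univ i)

theorem atom_le_compl_of_notMem (a : I → A) {S : Finset I} {i : I} (hi : i ∉ S) :
    atom a S ≤ (a i)ᶜ := by
  simpa [atom, hi] using inf_le (f := fun i => if i ∈ S then a i else (a i)ᶜ) (mem_univ i)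

theorem pairwise_disjoint_atom (a : I → A) : Pairwise (Disjoint on (atom a)) := by
  intro S T hST
  obtain ⟨i, hi⟩ : ∃ i, ¬(i ∈ S ↔ i ∈ T) := by
    by_contra! h
    exact hST (Finset.ext h)
  by_cases hiS : i ∈ S
  · exact disjoint_compl_right.mono (atom_le_of_mem a hiS)
      (atom_le_compl_of_notMem a fun hiT => hi (iff_of_true hiS hiT))
  · exact disjoint_compl_left.mono (atom_le_compl_of_notMem a hiS)
      (atom_le_of_mem a (by tauto))

theorem sup_atom_eq_top (a : I → A) : univ.sup (atom a) = ⊤ := by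
  have := sup_powerset_inf_ite_compl a univ
  rwa [powerset_univ] at this

theorem isCompl_sup_atom_sup_compl (a : I → A) (F : Finset (Finset I)) :
    IsCompl (F.sup (atom a)) (Fᶜ.sup (atom a)) where
  disjoint := Finset.disjoint_sup_left.2 fun _ hS => Finset.disjoint_sup_right.2 fun _ hT =>
    pairwise_disjoint_atom a fun h => mem_compl.1 hT (h ▸ hS)
  codisjoint := codisjoint_iff.2 (by rw [← sup_union, union_compl, sup_atom_eq_top])

theorem sup_atom_filter_mem (a : I → A) (i : I) :
    ({S | i ∈ S} : Finset (Finset I)).sup (atom a) = a i := by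
  set F : Finset (Finset I) := {S | i ∈ S}
  have hF : F.sup (atom a) ≤ a i := Finset.sup_le fun S hS => atom_le_of_mem a (mem_filter.1 hS).2
  have hFc : Fᶜ.sup (atom a) ≤ (a i)ᶜ := Finset.sup_le fun S hS =>
    atom_le_compl_of_notMem a fun h => mem_compl.1 hS (mem_filter.2 ⟨mem_univ S, h⟩)
  refine le_antisymm hF (Disjoint.left_le_of_le_sup_right ?_ (disjoint_compl_right.mono_right hFc))
  rw [codisjoint_iff.1 (isCompl_sup_atom_sup_compl a F).codisjoint]
  exact le_top

theorem exists_eq_sup_atom_of_mem_closure (a : I → A) {x : A}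
    (hx : x ∈ BooleanSubalgebra.closure (Set.range a)) :
    ∃ F : Finset (Finset I), x = F.sup (atom a) := by
  induction hx using BooleanSubalgebra.closure_bot_sup_induction with
  | mem x hx =>
    obtain ⟨i, rfl⟩ := hx
    exact ⟨_, (sup_atom_filter_mem a i).symm⟩
  | bot => exact ⟨∅, rfl⟩
  | sup x _ y _ hx hy =>
    obtain ⟨F, rfl⟩ := hx
    obtain ⟨G, rfl⟩ := hy
    exact ⟨F ∪ G, (sup_union).symm⟩
  | compl x _ hx =>
    obtain ⟨F, rfl⟩ := hx
    exact ⟨Fᶜ, (isCompl_sup_atom_sup_compl a F).compl_eq⟩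

end Atoms

namespace IndepTuples

variable {Pr : A → ℝ} {I J : Type*} {a : I → A} {b : J → A}

theorem symm (h : IndepTuples Pr a b) : IndepTuples Pr b a := fun X Y => by
  rw [inf_comm, h Y X, mul_comm]

theorem pr_inf_inf_compl [DecidableEq I] (hPr : FinitelyAdditive Pr) (h : IndepTuples Pr a b)
    (X Z : Finset I) (Y : Finset J) :
    Pr ((Z.inf a ⊓ X.inf fun i => (a i)ᶜ) ⊓ Y.inf b)
      = Pr (Z.inf a ⊓ X.inf fun i => (a i)ᶜ) * Pr (Y.inf b) := by
  induction X using Finset.induction generalizing Z with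
  | empty => simpa using h Z Y
  | insert i X _ ih =>
    set c := Z.inf a ⊓ X.inf fun i => (a i)ᶜ
    have hc : Z.inf a ⊓ (insert i X).inf (fun i => (a i)ᶜ) = (a i)ᶜ ⊓ c := by
      rw [inf_insert, inf_left_comm]
    have hic : a i ⊓ c = (insert i Z).inf a ⊓ X.inf fun i => (a i)ᶜ := by
      rw [inf_insert, inf_assoc]
    rw [hc, inf_assoc, hPr.map_compl_inf, hPr.map_compl_inf, ← inf_assoc, hic, ih, ih, ← hic]
    ring

theorem sumElim_compl [DecidableEq I] (hPr : FinitelyAdditive Pr) (h : IndepTuples Pr a b) :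
    IndepTuples Pr (Sum.elim a fun i => (a i)ᶜ) b := fun U Y => by
  rw [Finset.inf_sumElim]
  exact h.pr_inf_inf_compl hPr _ _ Y

theorem pr_atom_inf_atom [DecidableEq I] [Fintype I] [DecidableEq J] [Fintype J]
    (hPr : FinitelyAdditive Pr) (h : IndepTuples Pr a b) (S : Finset I) (T : Finset J) :
    Pr (atom a S ⊓ atom b T) = Pr (atom a S) * Pr (atom b T) := by
  rw [atom_eq_inf_disjSum, atom_eq_inf_disjSum]
  exact (h.sumElim_compl hPr).symm.sumElim_compl hPr |>.symm _ _

theorem pr_inf_of_mem_closure [DecidableEq I] [Fintype I] [DecidableEq J] [Fintype J]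
    (hPr : FinitelyAdditive Pr) (h : IndepTuples Pr a b) {x y : A}
    (hx : x ∈ BooleanSubalgebra.closure (Set.range a))
    (hy : y ∈ BooleanSubalgebra.closure (Set.range b)) : Pr (x ⊓ y) = Pr x * Pr y := by
  obtain ⟨F, rfl⟩ := exists_eq_sup_atom_of_mem_closure a hx
  obtain ⟨G, rfl⟩ := exists_eq_sup_atom_of_mem_closure b hy
  have hdisj :
      Pairwise (Disjoint on fun p : Finset I × Finset J => atom a p.1 ⊓ atom b p.2) := by
    rintro ⟨S, T⟩ ⟨S', T'⟩ hne
    by_cases hS : S = S'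
    · have hT : T ≠ T' := fun hT => hne (by rw [hS, hT])
      exact (pairwise_disjoint_atom b hT).mono inf_le_right inf_le_right
    · exact (pairwise_disjoint_atom a hS).mono inf_le_left inf_le_left
  rw [sup_inf_sup, hPr.map_finset_sup (hdisj.set_pairwise _),
    hPr.map_finset_sup ((pairwise_disjoint_atom a).set_pairwise _),
    hPr.map_finset_sup ((pairwise_disjoint_atom b).set_pairwise _), sum_mul_sum, sum_product]
  exact sum_congr rfl fun S _ => sum_congr rfl fun T _ => h.pr_atom_inf_atom hPr S T

end IndepTuples

theorem BT.eval_mem {v : ℕ → A} {L : BooleanSubalgebra A} (t : BT)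
    (hv : ∀ i ∈ t.vars, v i ∈ L) : t.eval v ∈ L := by
  induction t with
  | X i => exact hv i (mem_singleton_self i)
  | zero => exact L.bot_mem
  | one => exact L.top_mem
  | or t u iht ihu =>
    exact L.sup_mem (iht fun i hi => hv i (mem_union_left _ hi))
      (ihu fun i hi => hv i (mem_union_right _ hi))
  | and t u iht ihu =>
    exact L.inf_mem (iht fun i hi => hv i (mem_union_left _ hi))
      (ihu fun i hi => hv i (mem_union_right _ hi))
  | not t ih => exact L.compl_mem (ih hv)

theorem BT.eval_mem_closure_range {n : ℕ} {t : BT} (ht : t.vars ⊆ Icc 1 n) {a : Fin n → A}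
    {v : ℕ → A} (hv : ∀ i : Fin n, v (i.val + 1) = a i) :
    t.eval v ∈ BooleanSubalgebra.closure (Set.range a) := by
  refine t.eval_mem fun i hi => BooleanSubalgebra.subset_closure ?_
  obtain ⟨hi1, hin⟩ := mem_Icc.1 (ht hi)
  exact ⟨⟨i - 1, by omega⟩, by rw [← hv, Fin.val_mk, Nat.sub_add_cancel hi1]⟩

end

open BT in
theorem boolean_independence_general {A : Type*} [BooleanAlgebra A] (Pr : A → ℝ)
    (hbot : Pr ⊥ = 0)
    (hadd : ∀ a b : A, Pr (a ⊔ b) = Pr a + Pr b - Pr (a ⊓ b))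
    (n : ℕ) (t u : BT)
    (ht : vars t ⊆ Finset.Icc 1 n) (hu : vars u ⊆ Finset.Icc 1 n)
    (a b : Fin n → A) (hindep : IndepTuples Pr a b)
    (v w : ℕ → A)
    (hv : ∀ i : Fin n, v (i.val + 1) = a i)
    (hw : ∀ i : Fin n, w (i.val + 1) = b i) :
    Pr (eval v t ⊓ eval w u) = Pr (eval v t) * Pr (eval w u) := by
  have hPr : FinitelyAdditive Pr := fun x y hxy => by rw [hadd, hxy.eq_bot, hbot, sub_zero]
  exact hindep.pr_inf_of_mem_closure hPr (eval_mem_closure_range ht hv)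
    (eval_mem_closure_range hu hw)

open BT in
/-- Boolean Independence Theorem: if the events
`a 1, …, a n` are independent of the events `b 1, …, b n`, and `t`, `u` are
Boolean terms in the variables `X 1, …, X n`, then the event obtained by
evaluating `t` on `a 1, …, a n` (via any assignment `v` with `v i = a i` for
`i ∈ [n]`) is independent of the event obtained by evaluating `u` on
`b 1, …, b n`. -/
theorem boolean_independence {A : Type*} [BooleanAlgebra A] (Pr : A → ℝ)
    (hPr01 : ∀ a : A, 0 ≤ Pr a ∧ Pr a ≤ 1)
    (hbot : Pr ⊥ = 0) (htop : Pr ⊤ = 1)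
    (hadd : ∀ a b : A, Pr (a ⊔ b) = Pr a + Pr b - Pr (a ⊓ b))
    (n : ℕ) (hn : 1 ≤ n) (t u : BT)
    (ht : vars t ⊆ Finset.Icc 1 n) (hu : vars u ⊆ Finset.Icc 1 n)
    (a b : Fin n → A) (hindep : IndepTuples Pr a b)
    (v w : ℕ → A)
    (hv : ∀ i : Fin n, v (i.val + 1) = a i)
    (hw : ∀ i : Fin n, w (i.val + 1) = b i) :
    Pr (eval v t ⊓ eval w u) = Pr (eval v t) * Pr (eval w u) :=
  boolean_independence_general Pr hbot hadd n t u ht hu a b hindep v w hv hw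
end
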